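/- In the on-chain-verified audit game, assume (i) S_a > ((1 − p_a)/p_a)·R_a + c_a/(ε·p_a), (ii) R_a > c_a/(1 − ε), and (iii) R_s > c_s. Then the honest profile σ^h is the unique pure Nash equilibrium among the profiles in which every SP audits every other SP (a_i^j = 1 for all i ≠ j) and every reporting policy reports ✓ upon a valid proof (ρ_i^j(1) = 1 for all i ≠ j). -/
import Mathlib


/-!
On-chain-verified audit game: `N ≥ 3` storage providers (SPs), parameters
`R_s > 0` (storage reward), `R_a > 0` (per-audit reward), `c_s > 0` (storage cost),
`c_a > 0` (audit cost), `S_a ≥ 0` (slashing penalty), `p_a ∈ (0,1]` (inspection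
probability), `ε ∈ (0,1)` (noise). A pure strategy of SP `i` is a triple `(s, a, ρ)`:
a storage bit, audit bits for each other SP, and reporting policies `ρ j : Bool → Bool`
(report as a function of having received a valid proof).
-/

open Finset

/-- A pure strategy of storage provider `i` in the on-chain-verified audit game. -/
structure Strat (N : ℕ) (i : Fin N) where
  /-- whether `i` stores its assigned data -/
  s : Bool
  /-- whether `i` audits SP `j` (at cost `c_a`) -/
  a : {j : Fin N // j ≠ i} → Bool
  /-- `i`'s reporting policy about `j`, as a function of whether a valid proof was received -/
  ρ : {j : Fin N // j ≠ i} → Bool → Bool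

/-- Numerical value of a Boolean choice. -/
def b01 (b : Bool) : ℝ := if b then 1 else 0

/-- Expected audit payoff of the auditor from one ordered pair `(i,j)`, where `sj` is the
auditee's storage bit, `a` the auditor's audit bit, and `ρ` the auditor's reporting policy.
The backing probability is `β = 1 − ε` if the auditee stores and `0` otherwise; an unbacked
✓ report earns `(1 − p_a)·R_a − p_a·S_a` in expectation. -/
noncomputable def pairPayoff (Ra ca Sa pa ε : ℝ) (sj a : Bool) (ρ : Bool → Bool) : ℝ :=
  let β : ℝ := if sj then 1 - ε else 0
  let F : ℝ := (1 - pa) * Ra - pa * Sa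
  if a then β * b01 (ρ true) * Ra + (1 - β) * b01 (ρ false) * F - ca
  else b01 (ρ false) * (β * Ra + (1 - β) * F)

/-- The deterministic report of `i` about `j`: `r_i^j = ρ_i^j (a_i^j · s_j)`. -/
def report {N : ℕ} (σ : ∀ i : Fin N, Strat N i) (i : Fin N) (j : {j : Fin N // j ≠ i}) : Bool :=
  (σ i).ρ j ((σ i).a j && (σ j.1).s)

/-- Number of SPs `j ≠ i` whose deterministic report about `i` is ✓. -/
def trueReports {N : ℕ} (σ : ∀ i : Fin N, Strat N i) (i : Fin N) : ℕ :=
  (univ.filter fun j : {j : Fin N // j ≠ i} => report σ j.1 ⟨i, Ne.symm j.2⟩ = true).card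

/-- Total (expected) utility of SP `i`:
`u_i(σ) = R_s·1[|{j ≠ i : r_j^i = 1}| > N/2] − c_s·s_i + Σ_{j≠i} pairPayoff(i,j)`. -/
noncomputable def U {N : ℕ} (Rs Ra cs ca Sa pa ε : ℝ) (σ : ∀ i : Fin N, Strat N i)
    (i : Fin N) : ℝ :=
  Rs * (if (N : ℝ) / 2 < (trueReports σ i : ℝ) then 1 else 0)
    - cs * b01 (σ i).s
    + ∑ j : {j : Fin N // j ≠ i}, pairPayoff Ra ca Sa pa ε (σ j.1).s ((σ i).a j) ((σ i).ρ j)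

/-- Pure Nash equilibrium: no SP can strictly increase its own utility by unilaterally
changing its strategy. -/
def IsNashEq {N : ℕ} (Rs Ra cs ca Sa pa ε : ℝ) (σ : ∀ i : Fin N, Strat N i) : Prop :=
  ∀ (i : Fin N) (τ : Strat N i),
    U Rs Ra cs ca Sa pa ε (Function.update σ i τ) i ≤ U Rs Ra cs ca Sa pa ε σ i

/-- The honest strategy profile: store, audit everyone, report ✓ iff a valid proof
was received. -/
def honest (N : ℕ) : ∀ i : Fin N, Strat N i :=
  fun _ => ⟨true, fun _ => true, fun _ b => b⟩

/-- The fully dishonest strategy profile: don't store, don't audit, always report ✓. -/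
def dishonest (N : ℕ) : ∀ i : Fin N, Strat N i :=
  fun _ => ⟨false, fun _ => false, fun _ _ => true⟩


/- ### Auxiliary lemmas -/

@[simp] lemma b01_true : b01 true = 1 := rfl
@[simp] lemma b01_false : b01 false = 0 := rfl

lemma Strat.ext' {N : ℕ} {i : Fin N} {x y : Strat N i}
    (hs : x.s = y.s) (ha : ∀ j, x.a j = y.a j) (hρ : ∀ j b, x.ρ j b = y.ρ j b) : x = y := by
  cases x; cases y
  simp only [Strat.mk.injEq]
  exact ⟨hs, funext ha, funext fun j => funext fun b => hρ j b⟩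

lemma card_ne (N : ℕ) (i : Fin N) : Fintype.card {j : Fin N // j ≠ i} = N - 1 := by
  have := Fintype.card_subtype_compl (fun j : Fin N => j = i)
  simpa [Fintype.card_subtype_eq] using this

lemma trueReports_all_true {N : ℕ} (σ : ∀ i : Fin N, Strat N i) (i : Fin N)
    (h : ∀ j : {j : Fin N // j ≠ i}, report σ j.1 ⟨i, Ne.symm j.2⟩ = true) :
    trueReports σ i = N - 1 := by
  unfold trueReports
  rw [Finset.filter_true_of_mem (fun j _ => h j), Finset.card_univ]
  exact card_ne N i

lemma trueReports_all_false {N : ℕ} (σ : ∀ i : Fin N, Strat N i) (i : Fin N)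
    (h : ∀ j : {j : Fin N // j ≠ i}, report σ j.1 ⟨i, Ne.symm j.2⟩ = false) :
    trueReports σ i = 0 := by
  unfold trueReports
  rw [Finset.card_eq_zero, Finset.filter_eq_empty_iff]
  intro j _
  simp [h j]

lemma pairPayoff_true_id (Ra ca Sa pa ε : ℝ) :
    pairPayoff Ra ca Sa pa ε true true (fun b => b) = (1 - ε) * Ra - ca := by
  simp [pairPayoff, b01]

lemma pairPayoff_le_honest (Ra ca Sa pa ε : ℝ) (hca : 0 < ca) (hε0 : 0 < ε) (hε1 : ε < 1)
    (hFε : ε * ((1 - pa) * Ra - pa * Sa) < -ca) (hca2 : ca < (1 - ε) * Ra)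
    (a : Bool) (ρ : Bool → Bool) :
    pairPayoff Ra ca Sa pa ε true a ρ ≤ (1 - ε) * Ra - ca := by
  cases a <;> cases h1 : ρ true <;> cases h2 : ρ false <;>
    simp [pairPayoff, b01, h1, h2] <;> nlinarith

lemma pairPayoff_lt_id (Ra ca Sa pa ε : ℝ) (hca : 0 < ca) (hε0 : 0 < ε) (hε1 : ε < 1)
    (hFε : ε * ((1 - pa) * Ra - pa * Sa) < -ca) (hF : (1 - pa) * Ra - pa * Sa < 0)
    (sj : Bool) (ρ : Bool → Bool) (ht : ρ true = true) (hf : ρ false = true) :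
    pairPayoff Ra ca Sa pa ε sj true ρ < pairPayoff Ra ca Sa pa ε sj true (fun b => b) := by
  cases sj <;> simp [pairPayoff, b01, ht, hf] <;> nlinarith

/-- In the on-chain-verified audit game, under the strict conditions
(i) `S_a > ((1 − p_a)/p_a)·R_a + c_a/(ε·p_a)`, (ii) `R_a > c_a/(1 − ε)`, and
(iii) `R_s > c_s`, the honest profile is the unique pure Nash equilibrium among profiles
in which every SP audits every other SP and every reporting policy reports ✓ upon a
valid proof. -/
theorem onchain_honest_unique_nash_among_full_auditors
    (N : ℕ) (hN : 3 ≤ N) (Rs Ra cs ca Sa pa ε : ℝ)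
    (hRs : 0 < Rs) (hRa : 0 < Ra) (hcs : 0 < cs) (hca : 0 < ca) (hSa : 0 ≤ Sa)
    (hpa0 : 0 < pa) (hpa1 : pa ≤ 1) (hε0 : 0 < ε) (hε1 : ε < 1)
    (h1 : ((1 - pa) / pa) * Ra + ca / (ε * pa) < Sa)
    (h2 : ca / (1 - ε) < Ra)
    (h3 : cs < Rs) :
    IsNashEq Rs Ra cs ca Sa pa ε (honest N) ∧
      ∀ σ : ∀ i : Fin N, Strat N i,
        (∀ (i : Fin N) (j : {j : Fin N // j ≠ i}),
            (σ i).a j = true ∧ (σ i).ρ j true = true) →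
        IsNashEq Rs Ra cs ca Sa pa ε σ → σ = honest N := by
  classical
  -- derived numeric facts
  have hε1' : (0:ℝ) < 1 - ε := by linarith
  have hca2 : ca < (1 - ε) * Ra := by
    rw [div_lt_iff₀ hε1'] at h2
    linarith
  have hp : (0:ℝ) < ε * pa := by positivity
  have hFε : ε * ((1 - pa) * Ra - pa * Sa) < -ca := by
    have key : ε * pa * (((1 - pa) / pa) * Ra + ca / (ε * pa)) = ε * (1 - pa) * Ra + ca := by
      field_simp
    have h1' := mul_lt_mul_of_pos_left h1 hp
    rw [key] at h1'
    nlinarith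
  have hF : (1 - pa) * Ra - pa * Sa < 0 := by
    by_contra h
    push_neg at h
    nlinarith [mul_nonneg hε0.le h]
  have hN3 : (3:ℝ) ≤ (N:ℝ) := by exact_mod_cast hN
  have hhalf : ∀ i : Fin N, (N : ℝ) / 2 < ((N - 1 : ℕ) : ℝ) := by
    intro _
    have h1N : 1 ≤ N := by omega
    rw [Nat.cast_sub h1N, Nat.cast_one]
    linarith
  have hnothalf : ¬ ((N : ℝ) / 2 < ((0 : ℕ) : ℝ)) := by
    push_cast
    intro h
    linarith
  constructor
  · -- honest is a Nash equilibrium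
    intro i τ
    set σ' := Function.update (honest N) i τ with hσ'def
    have hτ : σ' i = τ := Function.update_self i τ (honest N)
    have hoth : ∀ j : {j : Fin N // j ≠ i}, σ' j.1 = honest N j.1 :=
      fun j => Function.update_of_ne j.2 τ (honest N)
    have hUh : U Rs Ra cs ca Sa pa ε (honest N) i
        = Rs - cs + ((N - 1 : ℕ) : ℝ) * ((1 - ε) * Ra - ca) := by
      have hrep : ∀ j : {j : Fin N // j ≠ i}, report (honest N) j.1 ⟨i, Ne.symm j.2⟩ = true := by
        intro j
        simp [report, honest]
      unfold U
      rw [trueReports_all_true _ _ hrep, if_pos (hhalf i)]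
      have hsum : ∑ j : {j : Fin N // j ≠ i},
          pairPayoff Ra ca Sa pa ε ((honest N) j.1).s (((honest N) i).a j) (((honest N) i).ρ j)
          = ((N - 1 : ℕ) : ℝ) * ((1 - ε) * Ra - ca) := by
        rw [Finset.sum_congr rfl (fun j _ => by
          show pairPayoff Ra ca Sa pa ε ((honest N) j.1).s (((honest N) i).a j) (((honest N) i).ρ j)
            = (1 - ε) * Ra - ca
          simpa [honest] using pairPayoff_true_id Ra ca Sa pa ε)]
        rw [Finset.sum_const, Finset.card_univ, card_ne, nsmul_eq_mul]
      rw [hsum]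
      simp [honest, b01]
      try ring
    rw [hUh]
    have hsj : ∀ j : {j : Fin N // j ≠ i}, (σ' j.1).s = true := by
      intro j
      rw [hoth j]
      rfl
    have hsum' : ∑ j : {j : Fin N // j ≠ i},
        pairPayoff Ra ca Sa pa ε ((σ' j.1).s) ((σ' i).a j) ((σ' i).ρ j)
        ≤ ((N - 1 : ℕ) : ℝ) * ((1 - ε) * Ra - ca) := by
      calc ∑ j : {j : Fin N // j ≠ i},
            pairPayoff Ra ca Sa pa ε ((σ' j.1).s) ((σ' i).a j) ((σ' i).ρ j)
          ≤ ∑ _j : {j : Fin N // j ≠ i}, ((1 - ε) * Ra - ca) := by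
            apply Finset.sum_le_sum
            intro j _
            rw [hsj j]
            exact pairPayoff_le_honest Ra ca Sa pa ε hca hε0 hε1 hFε hca2 _ _
        _ = ((N - 1 : ℕ) : ℝ) * ((1 - ε) * Ra - ca) := by
            rw [Finset.sum_const, Finset.card_univ, card_ne, nsmul_eq_mul]
    rw [hτ] at hsum'
    have hrep' : ∀ j : {j : Fin N // j ≠ i}, report σ' j.1 ⟨i, Ne.symm j.2⟩ = τ.s := by
      intro j
      unfold report
      rw [hoth j, hτ]
      simp [honest]
    unfold U
    cases hs : τ.s with
    | true =>
      rw [trueReports_all_true σ' i (fun j => by rw [hrep' j, hs]), if_pos (hhalf i), hτ, hs]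
      simp only [b01_true]
      linarith
    | false =>
      rw [trueReports_all_false σ' i (fun j => by rw [hrep' j, hs]), if_neg hnothalf, hτ, hs]
      simp only [b01_false]
      linarith
  · -- uniqueness
    intro σ hσ hNEσ
    -- Step A: everyone reports honestly on invalid proofs
    have hρf : ∀ (i : Fin N) (j : {j : Fin N // j ≠ i}), (σ i).ρ j false = false := by
      intro i j0
      by_contra hbad
      rw [Bool.not_eq_false] at hbad
      set τ : Strat N i := ⟨(σ i).s, (σ i).a, Function.update (σ i).ρ j0 (fun b => b)⟩ with hτdef
      set σ' := Function.update σ i τ with hσ'def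
      have hτ : σ' i = τ := Function.update_self i τ σ
      have hoth : ∀ j : {j : Fin N // j ≠ i}, σ' j.1 = σ j.1 :=
        fun j => Function.update_of_ne j.2 τ σ
      have htr : trueReports σ' i = trueReports σ i := by
        unfold trueReports
        congr 1
        apply Finset.filter_congr
        intro j _
        unfold report
        rw [hoth j, hτ]
      have hgt : U Rs Ra cs ca Sa pa ε σ i < U Rs Ra cs ca Sa pa ε σ' i := by
        unfold U
        rw [htr, hτ]
        have hs' : τ.s = (σ i).s := rfl
        rw [hs']
        have hsumlt : ∑ j : {j : Fin N // j ≠ i},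
            pairPayoff Ra ca Sa pa ε ((σ j.1).s) ((σ i).a j) ((σ i).ρ j)
            < ∑ j : {j : Fin N // j ≠ i},
            pairPayoff Ra ca Sa pa ε ((σ' j.1).s) (τ.a j) (τ.ρ j) := by
          apply Finset.sum_lt_sum
          · intro j _
            rw [hoth j]
            by_cases hj : j = j0
            · subst hj
              have hmono := pairPayoff_lt_id Ra ca Sa pa ε hca hε0 hε1 hFε hF
                (σ j.1).s ((σ i).ρ j) (hσ i j).2 hbad
              have ha1 : (σ i).a j = true := (hσ i j).1
              have hτa : τ.a j = true := ha1
              have hτρ : τ.ρ j = (fun b => b) := Function.update_self j _ _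
              simp only [hτa, hτρ, ha1, Function.update_self]
              exact hmono.le
            · have hτρ : τ.ρ j = (σ i).ρ j := Function.update_of_ne hj _ _
              simp only [hτρ, Function.update_of_ne hj]
              exact le_refl _
          · refine ⟨j0, Finset.mem_univ j0, ?_⟩
            rw [hoth j0]
            have ha1 : (σ i).a j0 = true := (hσ i j0).1
            have hτa : τ.a j0 = true := ha1
            have hτρ : τ.ρ j0 = (fun b => b) := Function.update_self j0 _ _
            simp only [hτa, hτρ, ha1, Function.update_self]
            exact pairPayoff_lt_id Ra ca Sa pa ε hca hε0 hε1 hFε hF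
              (σ j0.1).s ((σ i).ρ j0) (hσ i j0).2 hbad
        linarith
      exact absurd (hNEσ i τ) (not_le.2 hgt)
    -- Step B: everyone stores
    have hsB : ∀ i : Fin N, (σ i).s = true := by
      intro i
      by_contra hbad
      rw [Bool.not_eq_true] at hbad
      set τ : Strat N i := ⟨true, (σ i).a, (σ i).ρ⟩ with hτdef
      set σ' := Function.update σ i τ with hσ'def
      have hτ : σ' i = τ := Function.update_self i τ σ
      have hoth : ∀ j : {j : Fin N // j ≠ i}, σ' j.1 = σ j.1 :=
        fun j => Function.update_of_ne j.2 τ σ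
      have htr0 : trueReports σ i = 0 := by
        apply trueReports_all_false
        intro j
        unfold report
        rw [(hσ j.1 ⟨i, Ne.symm j.2⟩).1, hbad]
        exact hρf j.1 ⟨i, Ne.symm j.2⟩
      have htr1 : trueReports σ' i = N - 1 := by
        apply trueReports_all_true
        intro j
        unfold report
        rw [hoth j, hτ]
        have : τ.s = true := rfl
        rw [(hσ j.1 ⟨i, Ne.symm j.2⟩).1, this]
        exact (hσ j.1 ⟨i, Ne.symm j.2⟩).2
      have hgt : U Rs Ra cs ca Sa pa ε σ i < U Rs Ra cs ca Sa pa ε σ' i := by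
        unfold U
        rw [htr0, htr1, if_neg hnothalf, if_pos (hhalf i), hτ]
        have hsτ : τ.s = true := rfl
        rw [hsτ, hbad]
        have hsumeq : ∑ j : {j : Fin N // j ≠ i},
            pairPayoff Ra ca Sa pa ε ((σ j.1).s) ((σ i).a j) ((σ i).ρ j)
            = ∑ j : {j : Fin N // j ≠ i},
            pairPayoff Ra ca Sa pa ε ((σ' j.1).s) (τ.a j) (τ.ρ j) := by
          apply Finset.sum_congr rfl
          intro j _
          rw [hoth j]
        rw [hsumeq]
        simp only [b01_true, b01_false]
        linarith
      exact absurd (hNEσ i τ) (not_le.2 hgt)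
    -- conclude
    funext i
    apply Strat.ext'
    · exact hsB i
    · exact fun j => (hσ i j).1
    · intro j b
      cases b
      · exact hρf i j
      · exact (hσ i j).2
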